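/- Suppose V⁰ and V¹ are nonnegative functions along a trajectory satisfying V¹(e_{t}) = −R¹_t + γ V¹(e_{t+1}) and V⁰(e_t) = −R⁰_t + γ V⁰(e_{t+1}) with 0 ≤ γ < 1, V¹(e) ≤ V⁰(e) for all e, and R¹_t ≥ R⁰_t. If additionally V⁰(e_{t+1}) − V⁰(e_t) ≤ −W(e_t) + ψ(t) for a function W and bound ψ, then V¹(e_{t+1}) − V¹(e_t) ≤ −W(e_t) + ψ(t) − (R⁰_t − R¹_t), and since R⁰_t − R¹_t ≤ 0, the Lyapunov decrease condition V¹(e_{t+1}) − V¹(e_t) ≤ −W(e_t) + ψ'(t) holds with ψ'(t) = ψ(t) + (R¹_t − R⁰_t). -/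
import Mathlib

/-- One-step policy-improvement stability argument of Theorem 2. -/
theorem policy_improvement_lyapunov_decrease {E : Type*} (γ : ℝ) (hγ0 : 0 ≤ γ) (hγ1 : γ < 1)
    (e : ℕ → E) (V0 V1 : E → ℝ) (R0 R1 : ℕ → ℝ) (W : E → ℝ) (ψ : ℕ → ℝ)
    (hV0nonneg : ∀ x, 0 ≤ V0 x) (hV1nonneg : ∀ x, 0 ≤ V1 x)
    (hV1rec : ∀ t, V1 (e t) = -R1 t + γ * V1 (e (t + 1)))
    (hV0rec : ∀ t, V0 (e t) = -R0 t + γ * V0 (e (t + 1)))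
    (hle : ∀ x, V1 x ≤ V0 x)
    (hR : ∀ t, R0 t ≤ R1 t)
    (hV0dec : ∀ t, V0 (e (t + 1)) - V0 (e t) ≤ -W (e t) + ψ t) :
    (∀ t, V1 (e (t + 1)) - V1 (e t) ≤ -W (e t) + ψ t - (R0 t - R1 t)) ∧
    (∀ t, V1 (e (t + 1)) - V1 (e t) ≤ -W (e t) + (ψ t + (R1 t - R0 t))) := by
  have key : ∀ t, V1 (e (t + 1)) - V1 (e t) ≤ -W (e t) + ψ t - (R0 t - R1 t) := by
    intro t
    have h1 := hV1rec t
    have h0 := hV0rec t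
    have hd := hV0dec t
    have hle' := hle (e (t + 1))
    nlinarith [mul_le_mul_of_nonneg_left hle' (sub_pos.mpr hγ1).le]
  exact ⟨key, fun t => by linarith [key t]⟩
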